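/- There exists a constant C > 0 such that for every smooth compactly supported function f : ℝ³ → ℝ, ‖Z₃²f‖_{L²} ≤ C · ( ‖f‖_{L²} + ‖f‖_{L²}^{1/2} ‖Z₃³f‖_{L²}^{1/2} + ‖f‖_{L²}^{1/3} ‖Z₃³f‖_{L²}^{2/3} ). -/

import Mathlib

open MeasureTheory

/-- Vertical partial derivative `∂₃`. -/
noncomputable def pd3 (f : (Fin 3 → ℝ) → ℝ) : (Fin 3 → ℝ) → ℝ :=
  fun x => fderiv ℝ f x (Pi.single 2 1)

/-- The conormal vector field `Z₃ f = (x₃/(1+x₃)) ∂₃ f`. -/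
noncomputable def Z3 (f : (Fin 3 → ℝ) → ℝ) : (Fin 3 → ℝ) → ℝ :=
  fun x => (x 2 / (1 + x 2)) * pd3 f x

/-- L² norm over the upper half-space `{x : x₃ > 0}` of ℝ³. -/
noncomputable def L2H (f : (Fin 3 → ℝ) → ℝ) : ℝ :=
  (eLpNorm f 2 (volume.restrict {x : Fin 3 → ℝ | 0 < x 2})).toReal

open Set Filter Topology

namespace Stmt7

abbrev E3 := Fin 3 → ℝ

def U : Set E3 := {x | -1 < x 2}
def H : Set E3 := {x : Fin 3 → ℝ | 0 < x 2}

lemma isOpen_U : IsOpen U := isOpen_lt continuous_const (continuous_apply 2)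
lemma measurableSet_H : MeasurableSet H :=
  measurableSet_lt measurable_const (measurable_pi_apply 2)
lemma H_subset_U : H ⊆ U := fun x hx => show (-1:ℝ) < x 2 from lt_trans (by norm_num) (show (0:ℝ) < x 2 from hx)
lemma mem_U_of_nonneg {x : E3} (hx : 0 ≤ x 2) : x ∈ U := lt_of_lt_of_le (by norm_num) hx

lemma contDiffOn_phi : ContDiffOn ℝ (⊤ : ℕ∞) (fun x : E3 => x 2 / (1 + x 2)) U := by
  apply ContDiffOn.div
  · exact (contDiff_apply ℝ ℝ 2).contDiffOn
  · exact (contDiff_const.add (contDiff_apply ℝ ℝ 2)).contDiffOn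
  · intro x hx
    have : -1 < x 2 := hx
    intro h; linarith [h]

lemma contDiffOn_pd3 {g : E3 → ℝ} (hg : ContDiffOn ℝ (⊤ : ℕ∞) g U) :
    ContDiffOn ℝ (⊤ : ℕ∞) (pd3 g) U := by
  have h := hg.fderiv_of_isOpen (m := (⊤ : ℕ∞)) isOpen_U (by simp)
  exact h.clm_apply contDiffOn_const

lemma contDiffOn_Z3 {g : E3 → ℝ} (hg : ContDiffOn ℝ (⊤ : ℕ∞) g U) :
    ContDiffOn ℝ (⊤ : ℕ∞) (Z3 g) U :=
  contDiffOn_phi.mul (contDiffOn_pd3 hg)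

lemma pd3_zero_on {g : E3 → ℝ} {V : Set E3} (hV : IsOpen V) (h : ∀ y ∈ V, g y = 0)
    {x : E3} (hx : x ∈ V) : pd3 g x = 0 := by
  have hev : g =ᶠ[nhds x] (fun _ => (0:ℝ)) :=
    Filter.eventuallyEq_of_mem (hV.mem_nhds hx) h
  have : fderiv ℝ g x = fderiv ℝ (fun _ : E3 => (0:ℝ)) x := hev.fderiv_eq
  simp [pd3, this]

lemma Z3_zero_on {g : E3 → ℝ} {V : Set E3} (hV : IsOpen V) (h : ∀ y ∈ V, g y = 0)
    {x : E3} (hx : x ∈ V) : Z3 g x = 0 := by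
  simp [Z3, pd3_zero_on hV h hx]

lemma measurable_pd3 (g : E3 → ℝ) : Measurable (pd3 g) :=
  measurable_fderiv_apply_const ℝ g (Pi.single 2 1)

lemma measurable_Z3 (g : E3 → ℝ) : Measurable (Z3 g) :=
  (((measurable_pi_apply 2)).div ((measurable_const).add (measurable_pi_apply 2))).mul
    (measurable_pd3 g)

/-- `Good K g`: the properties we propagate. -/
structure Good (K : Set E3) (g : E3 → ℝ) : Prop where
  meas : Measurable g
  smooth : ContDiffOn ℝ (⊤ : ℕ∞) g U
  supp : ∀ x ∉ K, g x = 0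

variable {K : Set E3} (hK : IsCompact K) (hKU : Kᶜ ⊆ Kᶜ)

lemma Good.Z3 {g : E3 → ℝ} (hKc : IsClosed K) (hg : Good K g) : Good K (_root_.Z3 g) where
  meas := measurable_Z3 g
  smooth := contDiffOn_Z3 hg.smooth
  supp := fun x hx => Z3_zero_on hKc.isOpen_compl (fun y hy => hg.supp y hy) hx

lemma Good.bound {g : E3 → ℝ} (hK : IsCompact K) (hg : Good K g) :
    ∃ C : ℝ, 0 ≤ C ∧ ∀ x : E3, 0 ≤ x 2 → |g x| ≤ C := by
  have hcont : ContinuousOn g U := hg.smooth.continuousOn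
  have hKH : IsCompact (K ∩ {x : E3 | 0 ≤ x 2}) :=
    hK.inter_right (isClosed_le continuous_const (continuous_apply 2))
  have himg : IsCompact ((fun x => |g x|) '' (K ∩ {x : E3 | 0 ≤ x 2})) := by
    apply hKH.image_of_continuousOn
    exact (hcont.mono (fun x hx => mem_U_of_nonneg hx.2)).abs
  obtain ⟨C, hC⟩ := himg.bddAbove
  refine ⟨max C 0, le_max_right _ _, fun x hx => ?_⟩
  by_cases hxK : x ∈ K
  · exact le_trans (hC (mem_image_of_mem _ ⟨hxK, hx⟩)) (le_max_left _ _)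
  · simp [hg.supp x hxK]

lemma Good.memLp2 {g : E3 → ℝ} (hK : IsCompact K) (hg : Good K g) :
    MemLp g 2 (volume.restrict H) := by
  obtain ⟨C, hC0, hC⟩ := hg.bound hK
  have hind : MemLp (K.indicator fun _ => C) 2 (volume.restrict H) := by
    apply memLp_indicator_const 2 hK.measurableSet
    exact Or.inr ((Measure.restrict_apply_le H K).trans_lt hK.measure_lt_top).ne
  apply hind.of_le hg.meas.aestronglyMeasurable
  filter_upwards [ae_restrict_mem measurableSet_H] with x hx
  by_cases hxK : x ∈ K
  · simp only [Set.indicator_of_mem hxK]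
    calc ‖g x‖ = |g x| := rfl
    _ ≤ C := hC x (le_of_lt hx)
    _ ≤ ‖C‖ := le_abs_self C
  · simp [Set.indicator_of_notMem hxK, hg.supp x hxK]

lemma Good.integrable {g : E3 → ℝ} (hK : IsCompact K) (hg : Good K g) :
    Integrable g (volume.restrict H) := by
  rw [← memLp_one_iff_integrable]
  obtain ⟨C, hC0, hC⟩ := hg.bound hK
  have hind : MemLp (K.indicator fun _ => C) 1 (volume.restrict H) := by
    apply memLp_indicator_const 1 hK.measurableSet
    exact Or.inr ((Measure.restrict_apply_le H K).trans_lt hK.measure_lt_top).ne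
  apply hind.of_le hg.meas.aestronglyMeasurable
  filter_upwards [ae_restrict_mem measurableSet_H] with x hx
  by_cases hxK : x ∈ K
  · simp only [Set.indicator_of_mem hxK]
    exact le_trans (hC x (le_of_lt hx)) (le_abs_self C)
  · simp [Set.indicator_of_notMem hxK, hg.supp x hxK]

lemma Good.mul {g h : E3 → ℝ} (hg : Good K g) (hh : Measurable h)
    (hh2 : ContDiffOn ℝ (⊤ : ℕ∞) h U) : Good K (fun x => g x * h x) where
  meas := hg.meas.mul hh
  smooth := hg.smooth.mul hh2
  supp := fun x hx => by simp [hg.supp x hx]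

lemma Good.mul_right {g h : E3 → ℝ} (hg : Good K g) (hh : Measurable h)
    (hh2 : ContDiffOn ℝ (⊤ : ℕ∞) h U) : Good K (fun x => h x * g x) where
  meas := hh.mul hg.meas
  smooth := hh2.mul hg.smooth
  supp := fun x hx => by simp [hg.supp x hx]

lemma Good.add {g h : E3 → ℝ} (hg : Good K g) (hh : Good K h) :
    Good K (fun x => g x + h x) where
  meas := hg.meas.add hh.meas
  smooth := hg.smooth.add hh.smooth
  supp := fun x hx => by simp [hg.supp x hx, hh.supp x hx]

/-- The weight `((1+x₃)²)⁻¹` is measurable and smooth on `U`. -/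
lemma measurable_w : Measurable (fun x : E3 => ((1 + x 2)^2)⁻¹) :=
  (((measurable_const).add (measurable_pi_apply 2)).pow_const 2).inv

lemma contDiffOn_w : ContDiffOn ℝ (⊤ : ℕ∞) (fun x : E3 => ((1 + x 2)^2)⁻¹) U := by
  apply ContDiffOn.inv
  · exact ((contDiff_const.add (contDiff_apply ℝ ℝ 2)).pow 2).contDiffOn
  · intro x hx
    have h1 : (0:ℝ) < 1 + x 2 := by have : -1 < x 2 := hx; linarith
    positivity

/-- Splitting equivalence at the last coordinate. -/
noncomputable def T : E3 ≃ᵐ ℝ × (Fin 2 → ℝ) :=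
  MeasurableEquiv.piFinSuccAbove (fun _ : Fin 3 => ℝ) 2

noncomputable def ey (y : Fin 2 → ℝ) (t : ℝ) : E3 := T.symm (t, y)

lemma ey_apply2 (y : Fin 2 → ℝ) (t : ℝ) : ey y t 2 = t := by
  simp [ey, T, MeasurableEquiv.piFinSuccAbove_symm_apply, Fin.insertNthEquiv]

lemma ey_affine (y : Fin 2 → ℝ) (t : ℝ) : ey y t = ey y 0 + t • (Pi.single 2 1 : E3) := by
  funext j
  simp only [ey, T, MeasurableEquiv.piFinSuccAbove_symm_apply, Fin.insertNthEquiv,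
    Equiv.coe_fn_mk, Pi.add_apply, Pi.smul_apply]
  induction j using Fin.lastCases with
  | last =>
    have h2 : (2 : Fin 3) = Fin.last 2 := rfl
    rw [← h2, Fin.insertNth_apply_same, Fin.insertNth_apply_same]
    have : (Pi.single 2 1 : E3) 2 = 1 := Pi.single_eq_same (M := fun _ : Fin 3 => ℝ) 2 1
    rw [this]; simp
  | cast i =>
    have h2 : (2 : Fin 3) = Fin.last 2 := rfl
    have hne : i.castSucc ≠ (2 : Fin 3) := by rw [h2]; exact (Fin.castSucc_lt_last i).ne
    have hsucc : Fin.succAbove (2 : Fin 3) i = i.castSucc := by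
      rw [h2]; exact Fin.succAbove_last_apply i
    rw [← hsucc, Fin.insertNth_apply_succAbove, Fin.insertNth_apply_succAbove,
      Pi.single_eq_of_ne (hsucc ▸ hne)]
    simp

lemma hasDerivAt_ey (y : Fin 2 → ℝ) (t : ℝ) :
    HasDerivAt (ey y) (Pi.single 2 1 : E3) t := by
  have h : HasDerivAt (fun s : ℝ => ey y 0 + s • (Pi.single 2 1 : E3))
      ((1:ℝ) • (Pi.single 2 1 : E3)) t :=
    ((hasDerivAt_id t).smul_const (Pi.single 2 1 : E3)).const_add (ey y 0)
  rw [one_smul] at h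
  exact h.congr_deriv rfl |>.congr_of_eventuallyEq
    (Filter.Eventually.of_forall fun s => (ey_affine y s))

lemma continuous_ey (y : Fin 2 → ℝ) : Continuous (ey y) := by
  have : Continuous (fun s : ℝ => ey y 0 + s • (Pi.single 2 1 : E3)) := by continuity
  exact this.congr (fun s => (ey_affine y s).symm)

lemma ey_mem_U {y : Fin 2 → ℝ} {t : ℝ} (ht : -1 < t) : ey y t ∈ U := by
  show -1 < ey y t 2
  rw [ey_apply2]; exact ht

/-- The integrand of the integration-by-parts identity. -/
noncomputable def W (u v : E3 → ℝ) : E3 → ℝ :=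
  fun x => Z3 u x * v x + u x * (((1 + x 2)^2)⁻¹ * v x) + u x * Z3 v x

lemma Good.W {u v : E3 → ℝ} (hKc : IsClosed K) (hu : Good K u) (hv : Good K v) :
    Good K (W u v) := by
  have h1 : Good K (fun x => _root_.Z3 u x * v x) :=
    (hu.Z3 hKc).mul hv.meas hv.smooth
  have h2 : Good K (fun x => u x * (((1 + x 2)^2)⁻¹ * v x)) :=
    hu.mul (measurable_w.mul hv.meas) (contDiffOn_w.mul hv.smooth)
  have h3 : Good K (fun x => u x * _root_.Z3 v x) :=
    hu.mul (measurable_Z3 v) (contDiffOn_Z3 hv.smooth)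
  exact (h1.add h2).add h3

lemma slice_hasDerivAt {u v : E3 → ℝ} (hu : ContDiffOn ℝ (⊤ : ℕ∞) u U)
    (hv : ContDiffOn ℝ (⊤ : ℕ∞) v U) (y : Fin 2 → ℝ) {t : ℝ} (ht : -1 < t) :
    HasDerivAt (fun s => u (ey y s) * ((s / (1 + s)) * v (ey y s)))
      (W u v (ey y t)) t := by
  have hU : ey y t ∈ U := ey_mem_U ht
  have hmem := isOpen_U.mem_nhds hU
  have hdu : HasDerivAt (fun s => u (ey y s)) (pd3 u (ey y t)) t :=
    (((hu.contDiffAt hmem).differentiableAt (by simp)).hasFDerivAt).comp_hasDerivAt t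
      (hasDerivAt_ey y t)
  have hdv : HasDerivAt (fun s => v (ey y s)) (pd3 v (ey y t)) t :=
    (((hv.contDiffAt hmem).differentiableAt (by simp)).hasFDerivAt).comp_hasDerivAt t
      (hasDerivAt_ey y t)
  have h0 : (1:ℝ) + t ≠ 0 := by linarith
  have hphi : HasDerivAt (fun s : ℝ => s / (1 + s)) (((1+t)^2)⁻¹) t := by
    have h := (hasDerivAt_id t).div ((hasDerivAt_const t (1:ℝ)).add (hasDerivAt_id t)) h0
    have heq : (1*(1+t) - t*(0+1))/(1+t)^2 = ((1+t)^2)⁻¹ := by field_simp; ring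
    have h' : HasDerivAt (id / ((fun _ => (1:ℝ)) + id)) ((1+t)^2)⁻¹ t := by simpa [heq] using h
    exact h'
  have hd : HasDerivAt (fun s => u (ey y s) * ((s / (1 + s)) * v (ey y s)))
      (pd3 u (ey y t) * ((t / (1 + t)) * v (ey y t)) +
        u (ey y t) * (((1 + t) ^ 2)⁻¹ * v (ey y t) + t / (1 + t) * pd3 v (ey y t))) t :=
    hdu.mul (hphi.mul hdv)
  convert hd using 1
  simp only [Stmt7.W, Z3, ey_apply2]
  ring

lemma slice_integral_zero {u v : E3 → ℝ} (hK : IsCompact K) (hKc : IsClosed K)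
    (hu : Good K u) (hv : Good K v) (y : Fin 2 → ℝ) :
    ∫ t in Ioi (0:ℝ), W u v (ey y t) = 0 := by
  -- bound on the support in the vertical direction
  obtain ⟨R0, hR0⟩ := (hK.image (continuous_apply 2)).bddAbove
  set R : ℝ := max R0 1 with hR
  have hR1 : (1:ℝ) ≤ R := le_max_right _ _
  have hRK : ∀ x ∈ K, x 2 ≤ R := fun x hx =>
    le_trans (hR0 (mem_image_of_mem _ hx)) (le_max_left _ _)
  have hnotK : ∀ t : ℝ, R < t → ey y t ∉ K := by
    intro t htR hmem
    exact absurd (hRK _ hmem) (by rw [ey_apply2]; linarith)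
  have hWK : Good K (W u v) := hu.W hKc hv
  have hWvan : ∀ t : ℝ, R < t → W u v (ey y t) = 0 := fun t htR =>
    hWK.supp _ (hnotK t htR)
  -- continuity of compositions on (-1, ∞)
  have hmaps : MapsTo (ey y) {t : ℝ | -1 < t} U := fun t ht => ey_mem_U ht
  have hWcont : ContinuousOn (fun t => W u v (ey y t)) {t : ℝ | -1 < t} :=
    hWK.smooth.continuousOn.comp (continuous_ey y).continuousOn hmaps
  have hopen : IsOpen {t : ℝ | -1 < t} := isOpen_lt continuous_const continuous_id
  have hIci : Ici (0:ℝ) ⊆ {t : ℝ | -1 < t} := fun t ht => lt_of_lt_of_le (show (-1:ℝ) < 0 by norm_num) ht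
  -- integrability of the derivative on (0, ∞)
  have hint : IntegrableOn (fun t => W u v (ey y t)) (Ioi (0:ℝ)) := by
    have hsplit : Ioc (0:ℝ) R ∪ Ioi R = Ioi 0 := Ioc_union_Ioi_eq_Ioi (by linarith)
    rw [← hsplit]
    apply IntegrableOn.union
    · have hIcc : ContinuousOn (fun t => W u v (ey y t)) (Icc (0:ℝ) R) :=
        hWcont.mono (fun t ht => hIci ht.1)
      exact (hIcc.integrableOn_compact isCompact_Icc).mono_set Ioc_subset_Icc_self
    · have : IntegrableOn (fun _ : ℝ => (0:ℝ)) (Ioi R) := integrableOn_zero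
      exact this.congr_fun (fun t ht => (hWvan t ht).symm) measurableSet_Ioi
  -- the primitive
  set F : ℝ → ℝ := fun s => u (ey y s) * ((s / (1 + s)) * v (ey y s)) with hF
  have hFcont : ContinuousOn F {t : ℝ | -1 < t} := by
    apply ContinuousOn.mul
    · exact hu.smooth.continuousOn.comp (continuous_ey y).continuousOn hmaps
    · apply ContinuousOn.mul
      · apply ContinuousOn.div continuousOn_id (by fun_prop)
        intro t ht; have : -1 < t := ht; intro h; linarith [h]
      · exact hv.smooth.continuousOn.comp (continuous_ey y).continuousOn hmaps
  have hcont0 : ContinuousWithinAt F (Ici 0) 0 :=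
    ((hFcont.continuousAt (hopen.mem_nhds (by norm_num))).continuousWithinAt)
  have hderiv : ∀ t ∈ Ioi (0:ℝ), HasDerivAt F (W u v (ey y t)) t := fun t ht =>
    slice_hasDerivAt hu.smooth hv.smooth y (lt_trans (by norm_num) ht)
  have hlim : Tendsto F atTop (nhds 0) := by
    apply Tendsto.congr' _ tendsto_const_nhds
    filter_upwards [Ioi_mem_atTop R] with t ht
    simp [hF, hu.supp _ (hnotK t ht)]
  have := integral_Ioi_of_hasDerivAt_of_tendsto hcont0 hderiv hint hlim
  rw [this, hF]
  simp

lemma T_preimage : T ⁻¹' (Ioi (0:ℝ) ×ˢ (univ : Set (Fin 2 → ℝ))) = H := by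
  ext x
  simp only [mem_preimage, mem_prod, mem_univ, and_true, mem_Ioi]
  have : (T x).1 = x 2 := rfl
  rw [this]; rfl

lemma MP2 : MeasurePreserving T (volume.restrict H)
    ((volume.restrict (Ioi (0:ℝ))).prod (volume : Measure (Fin 2 → ℝ))) := by
  have MP : MeasurePreserving T volume volume :=
    volume_preserving_piFinSuccAbove (fun _ : Fin 3 => ℝ) 2
  refine ⟨T.measurable, ?_⟩
  have hS : MeasurableSet (Ioi (0:ℝ) ×ˢ (univ : Set (Fin 2 → ℝ))) :=
    measurableSet_Ioi.prod MeasurableSet.univ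
  calc Measure.map (⇑T) (volume.restrict H)
      = Measure.map (⇑T) (volume.restrict (T ⁻¹' (Ioi (0:ℝ) ×ˢ univ))) := by rw [T_preimage]
    _ = (Measure.map (⇑T) volume).restrict (Ioi (0:ℝ) ×ˢ univ) :=
        (Measure.restrict_map T.measurable hS).symm
    _ = (volume : Measure (ℝ × (Fin 2 → ℝ))).restrict (Ioi (0:ℝ) ×ˢ univ) := by rw [MP.map_eq]
    _ = ((volume : Measure ℝ).prod (volume : Measure (Fin 2 → ℝ))).restrict
          (Ioi (0:ℝ) ×ˢ univ) := by rw [Measure.volume_eq_prod]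
    _ = (volume.restrict (Ioi (0:ℝ))).prod (volume : Measure (Fin 2 → ℝ)) := by
        rw [← Measure.prod_restrict, Measure.restrict_univ]

lemma ibp {u v : E3 → ℝ} (hK : IsCompact K) (hKc : IsClosed K)
    (hu : Good K u) (hv : Good K v) :
    ∫ x in H, W u v x = 0 := by
  have hWK : Good K (W u v) := hu.W hKc hv
  have hWint : Integrable (W u v) (volume.restrict H) := hWK.integrable hK
  have hcomp : ∀ x : E3, W u v (T.symm (T x)) = W u v x := fun x => by
    rw [T.symm_apply_apply]
  have hW2int : Integrable (fun p : ℝ × (Fin 2 → ℝ) => W u v (T.symm p))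
      ((volume.restrict (Ioi (0:ℝ))).prod (volume : Measure (Fin 2 → ℝ))) := by
    have h := integrable_map_equiv T (fun p : ℝ × (Fin 2 → ℝ) => W u v (T.symm p))
      (μ := volume.restrict H)
    rw [MP2.map_eq] at h
    apply h.mpr
    apply hWint.congr
    exact Filter.Eventually.of_forall (fun x => (hcomp x).symm)
  calc ∫ x in H, W u v x
      = ∫ x, W u v (T.symm (T x)) ∂(volume.restrict H) := by
        simp_rw [hcomp]
    _ = ∫ p, W u v (T.symm p)
          ∂((volume.restrict (Ioi (0:ℝ))).prod (volume : Measure (Fin 2 → ℝ))) :=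
        MP2.integral_comp T.measurableEmbedding (fun p => W u v (T.symm p))
    _ = ∫ y : Fin 2 → ℝ, ∫ t in Ioi (0:ℝ), W u v (T.symm (t, y)) :=
        integral_prod_symm _ hW2int
    _ = 0 := by
        have : ∀ y : Fin 2 → ℝ, ∫ t in Ioi (0:ℝ), W u v (T.symm (t, y)) = 0 := fun y =>
          slice_integral_zero hK hKc hu hv y
        simp_rw [this, integral_zero]

lemma L2H_def (g : E3 → ℝ) : L2H g = (eLpNorm g 2 (volume.restrict H)).toReal := rfl

lemma L2H_nonneg (g : E3 → ℝ) : 0 ≤ L2H g := ENNReal.toReal_nonneg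

lemma L2H_eq_rpow {g : E3 → ℝ} (hg : MemLp g 2 (volume.restrict H)) :
    L2H g = (∫ x in H, ‖g x‖ ^ (2:ℝ)) ^ ((2:ℝ)⁻¹) := by
  have h := hg.eLpNorm_eq_integral_rpow_norm (by norm_num) (by norm_num)
  have h2 : (2 : ENNReal).toReal = (2:ℝ) := by norm_num
  rw [h2] at h
  rw [L2H_def, h, ENNReal.toReal_ofReal]
  positivity

lemma sq_L2H {g : E3 → ℝ} (hg : MemLp g 2 (volume.restrict H)) :
    L2H g ^ 2 = ∫ x in H, g x * g x := by
  have hI : 0 ≤ ∫ x in H, ‖g x‖ ^ (2:ℝ) :=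
    integral_nonneg (fun x => Real.rpow_nonneg (norm_nonneg _) _)
  rw [L2H_eq_rpow hg, ← Real.rpow_natCast ((∫ x in H, ‖g x‖ ^ (2:ℝ)) ^ ((2:ℝ)⁻¹)) 2,
    ← Real.rpow_mul hI]
  norm_num
  apply integral_congr_ae
  apply Filter.Eventually.of_forall
  intro x
  show g x ^ 2 = g x * g x
  ring

lemma holder {g h : E3 → ℝ} (hg : MemLp g 2 (volume.restrict H))
    (hh : MemLp h 2 (volume.restrict H)) :
    ∫ x in H, |g x * h x| ≤ L2H g * L2H h := by
  have hpq : Real.HolderConjugate 2 2 := ⟨by norm_num, by norm_num, by norm_num⟩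
  have h2 : ENNReal.ofReal (2:ℝ) = 2 := by
    rw [show ((2:ℝ)) = ((2:ℕ):ℝ) by norm_num, ENNReal.ofReal_natCast]; norm_num
  have key := integral_mul_norm_le_Lp_mul_Lq hpq (h2 ▸ hg) (h2 ▸ hh)
  calc ∫ x in H, |g x * h x| = ∫ x in H, ‖g x‖ * ‖h x‖ := by
        apply integral_congr_ae; apply Filter.Eventually.of_forall; intro x
        simp [Real.norm_eq_abs, abs_mul]
    _ ≤ (∫ x in H, ‖g x‖ ^ (2:ℝ)) ^ ((1:ℝ)/2) * (∫ x in H, ‖h x‖ ^ (2:ℝ)) ^ ((1:ℝ)/2) := key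
    _ = L2H g * L2H h := by rw [L2H_eq_rpow hg, L2H_eq_rpow hh, one_div]

lemma alg {a b c d : ℝ} (ha : 0 ≤ a) (hb : 0 ≤ b) (hc : 0 ≤ c) (hd : 0 ≤ d)
    (h1 : b^2 ≤ a*b + a*c) (h2 : c^2 ≤ b*c + b*d) :
    c ≤ 8*(a + a ^ ((1:ℝ)/2) * d ^ ((1:ℝ)/2) + a ^ ((1:ℝ)/3) * d ^ ((2:ℝ)/3)) := by
  set m : ℝ := a ^ ((1:ℝ)/3) * d ^ ((2:ℝ)/3) with hm
  have hm0 : 0 ≤ m := mul_nonneg (Real.rpow_nonneg ha _) (Real.rpow_nonneg hd _)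
  have hm3 : m^3 = a * d^2 := by
    rw [hm, mul_pow, ← Real.rpow_natCast (a ^ ((1:ℝ)/3)) 3,
      ← Real.rpow_natCast (d ^ ((2:ℝ)/3)) 3, ← Real.rpow_mul ha, ← Real.rpow_mul hd]
    norm_num
  have key : c^3 ≤ 512*a^3 + 8*(a*d^2) := by
    rcases le_or_gt c (8*a) with h | h
    · nlinarith [pow_le_pow_left₀ hc h 3, mul_nonneg ha (sq_nonneg d)]
    · have hbc : b ≤ c := by nlinarith
      have hb2 : b^2 ≤ 2*a*c := by nlinarith
      have hbc2 : b ≤ c/2 := by nlinarith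
      have h3 : c^2/2 ≤ b*d := by nlinarith
      have h4 : c^4 ≤ 8*a*c*d^2 := by nlinarith [sq_nonneg (b*d), sq_nonneg d]
      have hc0 : (0:ℝ) < c := lt_of_le_of_lt (by linarith) h
      have h5 : c^3 ≤ 8*a*d^2 := le_of_mul_le_mul_left (by nlinarith) hc0
      nlinarith [pow_nonneg ha 3]
  have step : c ≤ 8*a + 2*m := by
    have hcube : c^3 ≤ (8*a + 2*m)^3 := by
      nlinarith [mul_nonneg ha hm0, mul_nonneg (mul_nonneg ha ha) hm0,
        mul_nonneg (mul_nonneg hm0 hm0) ha]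
    exact le_of_pow_le_pow_left₀ (by norm_num) (by positivity) hcube
  have hmid : 0 ≤ a ^ ((1:ℝ)/2) * d ^ ((1:ℝ)/2) :=
    mul_nonneg (Real.rpow_nonneg ha _) (Real.rpow_nonneg hd _)
  nlinarith

lemma est {f : E3 → ℝ} (hK : IsCompact K) (hKc : IsClosed K)
    (hGood : ∀ k : ℕ, Good K (Z3^[k] f)) (k : ℕ) :
    L2H (Z3^[k+1] f) ^ 2 ≤ L2H (Z3^[k] f) * L2H (Z3^[k+1] f) +
      L2H (Z3^[k] f) * L2H (Z3^[k+2] f) := by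
  set u : E3 → ℝ := Z3^[k] f with hu'
  set v : E3 → ℝ := Z3^[k+1] f with hv'
  set w : E3 → ℝ := Z3^[k+2] f with hw'
  have hu : Good K u := hGood k
  have hv : Good K v := hGood (k+1)
  have hw : Good K w := hGood (k+2)
  have hZu : _root_.Z3 u = v := (Function.iterate_succ_apply' Z3 k f).symm
  have hZv : _root_.Z3 v = w := (Function.iterate_succ_apply' Z3 (k+1) f).symm
  have hibp : ∫ x in H, W u v x = 0 := ibp hK hKc hu hv
  have hP : Good K (fun x => v x * v x) := hv.mul hv.meas hv.smooth
  have hQ : Good K (fun x => u x * (((1 + x 2)^2)⁻¹ * v x)) :=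
    hu.mul (measurable_w.mul hv.meas) (contDiffOn_w.mul hv.smooth)
  have hS : Good K (fun x => u x * w x) := hu.mul hw.meas hw.smooth
  have hUV : Good K (fun x => u x * v x) := hu.mul hv.meas hv.smooth
  have hWeq : W u v = fun x => (v x * v x + u x * (((1 + x 2)^2)⁻¹ * v x)) + u x * w x := by
    funext x
    simp only [Stmt7.W, hZu, hZv]
  have hibp' : ∫ x in H, ((v x * v x + u x * (((1 + x 2)^2)⁻¹ * v x)) + u x * w x) = 0 := by
    rw [← hibp]
    apply integral_congr_ae
    apply Filter.Eventually.of_forall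
    intro x
    rw [hWeq]
  have eA : ∫ x in H, ((v x * v x + u x * (((1 + x 2)^2)⁻¹ * v x)) + u x * w x)
      = (∫ x in H, (v x * v x + u x * (((1 + x 2)^2)⁻¹ * v x))) + ∫ x in H, u x * w x :=
    integral_add ((hP.integrable hK).add (hQ.integrable hK)) (hS.integrable hK)
  have eB : ∫ x in H, (v x * v x + u x * (((1 + x 2)^2)⁻¹ * v x))
      = (∫ x in H, v x * v x) + ∫ x in H, u x * (((1 + x 2)^2)⁻¹ * v x) :=
    integral_add (hP.integrable hK) (hQ.integrable hK)
  have hsum : (∫ x in H, v x * v x) + (∫ x in H, u x * (((1 + x 2)^2)⁻¹ * v x))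
      + (∫ x in H, u x * w x) = 0 := by
    rw [← eB, ← eA, hibp']
  have habsQ : ∫ x in H, |u x * (((1 + x 2)^2)⁻¹ * v x)| ≤ ∫ x in H, |u x * v x| := by
    apply integral_mono_ae (hQ.integrable hK).abs (hUV.integrable hK).abs
    filter_upwards [ae_restrict_mem measurableSet_H] with x hx
    have hx2 : (0:ℝ) < x 2 := hx
    have hw1 : ((1 + x 2)^2)⁻¹ ≤ 1 := by
      rw [inv_le_one_iff₀]; right; nlinarith
    have hw0 : (0:ℝ) ≤ ((1 + x 2)^2)⁻¹ := by positivity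
    rw [abs_mul, abs_mul, abs_mul]
    have h1 : |((1 + x 2)^2)⁻¹| = ((1 + x 2)^2)⁻¹ := abs_of_nonneg hw0
    rw [h1]
    exact mul_le_mul_of_nonneg_left (mul_le_of_le_one_left (abs_nonneg _) hw1) (abs_nonneg _)
  have hQle : -(∫ x in H, u x * (((1 + x 2)^2)⁻¹ * v x)) ≤ L2H u * L2H v := by
    calc -(∫ x in H, u x * (((1 + x 2)^2)⁻¹ * v x))
        ≤ |∫ x in H, u x * (((1 + x 2)^2)⁻¹ * v x)| := neg_le_abs _
      _ ≤ ∫ x in H, |u x * (((1 + x 2)^2)⁻¹ * v x)| := by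
          have := norm_integral_le_integral_norm (μ := volume.restrict H)
            (f := fun x : E3 => u x * (((1 + x 2)^2)⁻¹ * v x))
          simpa only [Real.norm_eq_abs] using this
      _ ≤ ∫ x in H, |u x * v x| := habsQ
      _ ≤ L2H u * L2H v := holder (hu.memLp2 hK) (hv.memLp2 hK)
  have hSle : -(∫ x in H, u x * w x) ≤ L2H u * L2H w := by
    calc -(∫ x in H, u x * w x) ≤ |∫ x in H, u x * w x| := neg_le_abs _
      _ ≤ ∫ x in H, |u x * w x| := by
          have := norm_integral_le_integral_norm (μ := volume.restrict H)
            (f := fun x : E3 => u x * w x)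
          simpa only [Real.norm_eq_abs] using this
      _ ≤ L2H u * L2H w := holder (hu.memLp2 hK) (hw.memLp2 hK)
  have hsq : L2H v ^ 2 = ∫ x in H, v x * v x := sq_L2H (hv.memLp2 hK)
  linarith

end Stmt7

/-- Interpolation inequality:
`‖Z₃² f‖ ≲ ‖f‖ + ‖f‖^{1/2} ‖Z₃³ f‖^{1/2} + ‖f‖^{1/3} ‖Z₃³ f‖^{2/3}`. -/
theorem stmt7 :
    ∃ C > (0 : ℝ), ∀ f : (Fin 3 → ℝ) → ℝ,
      ContDiff ℝ (⊤ : ℕ∞) f → HasCompactSupport f →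
      L2H (Z3^[2] f) ≤ C * (L2H f + L2H f ^ ((1 : ℝ)/2) * L2H (Z3^[3] f) ^ ((1 : ℝ)/2) +
        L2H f ^ ((1 : ℝ)/3) * L2H (Z3^[3] f) ^ ((2 : ℝ)/3)) := by
  refine ⟨8, by norm_num, ?_⟩
  intro f hf hsupp
  have hK : IsCompact (tsupport f) := hsupp
  have hKc : IsClosed (tsupport f) := isClosed_tsupport f
  have hGood : ∀ k : ℕ, Stmt7.Good (tsupport f) (Z3^[k] f) := by
    intro k
    induction k with
    | zero =>
      rw [Function.iterate_zero_apply]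
      exact ⟨hf.continuous.measurable, hf.contDiffOn,
        fun x hx => image_eq_zero_of_notMem_tsupport hx⟩
    | succ k ih =>
      rw [Function.iterate_succ_apply']
      exact ih.Z3 hKc
  have h1 := Stmt7.est hK hKc hGood 0
  have h2 := Stmt7.est hK hKc hGood 1
  rw [show Z3^[0] f = f from Function.iterate_zero_apply Z3 f] at h1
  have := Stmt7.alg (Stmt7.L2H_nonneg f) (Stmt7.L2H_nonneg (Z3^[1] f))
    (Stmt7.L2H_nonneg (Z3^[2] f)) (Stmt7.L2H_nonneg (Z3^[3] f)) h1 h2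
  exact this
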